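/- Let X, X', Y, Z be finite-valued random variables such that I(Y; Z | (X, X')) = 0 (Z is a representation of X), I(Y; X | X') = 0 (X is redundant with respect to X' for Y), and I(X; X' | Z) = 0 (Z is sufficient for X'). Then I(X; Y | Z) = 0, i.e., Z is also sufficient for Y. -/

import Mathlib

/-
Discrete probability setup: a finite sample space `Ω` with weight function `p`
(nonnegative, summing to 1).  Random variables are functions out of `Ω` into
nonempty finite sets.  `pr p X x = P(X = x)`, `ent` is Shannon entropy
(natural log, with `0 · log 0 = 0` since `Real.log 0 = 0`), `mi` is mutual
information `I(X;Y) = H(X) + H(Y) - H(X,Y)`, and `cmi` is conditional mutual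
information `I(X;Y|W) = ∑ w, P(W=w) · I(X;Y | W=w)` computed with respect to
the conditional distribution `condp p W w` (terms with `P(W=w)=0` vanish).
`klDivF` is the discrete Kullback–Leibler divergence with the convention that
terms with `p s = 0` contribute `0` (indeed `0 * log 0 = 0` in Lean).
-/

open scoped Classical
open Finset

noncomputable def pr {Ω α : Type*} [Fintype Ω] (p : Ω → ℝ) (X : Ω → α) (x : α) : ℝ :=
  ∑ ω, if X ω = x then p ω else 0

noncomputable def ent {Ω α : Type*} [Fintype Ω] [Fintype α] (p : Ω → ℝ) (X : Ω → α) : ℝ :=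
  -∑ x, pr p X x * Real.log (pr p X x)

noncomputable def mi {Ω α β : Type*} [Fintype Ω] [Fintype α] [Fintype β]
    (p : Ω → ℝ) (X : Ω → α) (Y : Ω → β) : ℝ :=
  ent p X + ent p Y - ent p (fun ω => (X ω, Y ω))

noncomputable def condp {Ω γ : Type*} [Fintype Ω] (p : Ω → ℝ) (W : Ω → γ) (w : γ) : Ω → ℝ :=
  fun ω => if W ω = w then p ω / pr p W w else 0

noncomputable def cmi {Ω α β γ : Type*} [Fintype Ω] [Fintype α] [Fintype β] [Fintype γ]
    (p : Ω → ℝ) (X : Ω → α) (Y : Ω → β) (W : Ω → γ) : ℝ :=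
  ∑ w, pr p W w * mi (condp p W w) X Y

noncomputable def klDivF {S : Type*} [Fintype S] (p q : S → ℝ) : ℝ :=
  ∑ s, p s * Real.log (p s / q s)

/-!
Expanding each conditional mutual information into joint entropies gives the identity
`I(X;Y|Z) + I(X;X'|Y,Z) + I(Y;Z|X') = I(Y;Z|X,X') + I(Y;X|X') + I(X;X'|Z)`.
The three hypotheses make the right side vanish, while every term on the left is nonnegative
(Gibbs' inequality for each conditional distribution), so `I(X;Y|Z) = 0`.
-/

section Distribution

variable {Ω α β : Type*} [Fintype Ω] (p : Ω → ℝ)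

lemma pr_nonneg (hp : ∀ ω, 0 ≤ p ω) (X : Ω → α) (x : α) : 0 ≤ pr p X x :=
  Finset.sum_nonneg fun ω _ => by split_ifs <;> simp [hp ω]

lemma sum_pr [Fintype α] (X : Ω → α) : ∑ x, pr p X x = ∑ ω, p ω := by
  unfold pr
  rw [Finset.sum_comm]
  simp

lemma sum_pr_pair_right [Fintype β] (X : Ω → α) (Y : Ω → β) (x : α) :
    ∑ y, pr p (fun ω => (X ω, Y ω)) (x, y) = pr p X x := by
  unfold pr
  rw [Finset.sum_comm]
  refine Finset.sum_congr rfl fun ω _ => ?_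
  by_cases h : X ω = x <;> simp [h, Prod.ext_iff]

lemma sum_pr_pair_left [Fintype α] (X : Ω → α) (Y : Ω → β) (y : β) :
    ∑ x, pr p (fun ω => (X ω, Y ω)) (x, y) = pr p Y y := by
  unfold pr
  rw [Finset.sum_comm]
  refine Finset.sum_congr rfl fun ω _ => ?_
  by_cases h : Y ω = y <;> simp [h, Prod.ext_iff]

lemma pr_pair_le_left (hp : ∀ ω, 0 ≤ p ω) (X : Ω → α) (Y : Ω → β) (x : α) (y : β) :
    pr p (fun ω => (X ω, Y ω)) (x, y) ≤ pr p X x :=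
  Finset.sum_le_sum fun ω _ => by
    by_cases h1 : X ω = x <;> by_cases h2 : Y ω = y <;> simp [h1, h2, hp ω]

lemma pr_pair_le_right (hp : ∀ ω, 0 ≤ p ω) (X : Ω → α) (Y : Ω → β) (x : α) (y : β) :
    pr p (fun ω => (X ω, Y ω)) (x, y) ≤ pr p Y y :=
  Finset.sum_le_sum fun ω _ => by
    by_cases h1 : X ω = x <;> by_cases h2 : Y ω = y <;> simp [h1, h2, hp ω]

lemma pr_comp_equiv (e : α ≃ β) (X : Ω → α) (x : α) :
    pr p (fun ω => e (X ω)) (e x) = pr p X x := by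
  simp [pr]

lemma ent_comp_equiv [Fintype α] [Fintype β] (e : α ≃ β) (X : Ω → α) :
    ent p (fun ω => e (X ω)) = ent p X := by
  unfold ent
  rw [← e.sum_comp]
  simp only [pr_comp_equiv]

end Distribution

section Conditioning

variable {Ω α γ : Type*} [Fintype Ω] (p : Ω → ℝ)

lemma pr_condp (W : Ω → γ) (w : γ) (T : Ω → α) (x : α) :
    pr (condp p W w) T x = pr p (fun ω => (T ω, W ω)) (x, w) / pr p W w := by
  unfold condp pr
  rw [Finset.sum_div]
  refine Finset.sum_congr rfl fun ω _ => ?_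
  by_cases h1 : T ω = x <;> by_cases h2 : W ω = w <;> simp [h1, h2]

lemma condp_nonneg (hp : ∀ ω, 0 ≤ p ω) (W : Ω → γ) (w : γ) (ω : Ω) : 0 ≤ condp p W w ω := by
  unfold condp
  split_ifs
  · exact div_nonneg (hp ω) (pr_nonneg p hp W w)
  · rfl

lemma sum_condp (W : Ω → γ) (w : γ) (hw : pr p W w ≠ 0) : ∑ ω, condp p W w ω = 1 := by
  have : ∑ ω, condp p W w ω = pr p W w / pr p W w := by
    unfold condp pr
    rw [Finset.sum_div]
    exact Finset.sum_congr rfl fun ω _ => by split_ifs <;> simp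
  rw [this, div_self hw]

lemma pr_mul_ent_condp [Fintype α] (hp : ∀ ω, 0 ≤ p ω) (T : Ω → α) (W : Ω → γ) (w : γ) :
    pr p W w * ent (condp p W w) T
      = -∑ x, pr p (fun ω => (T ω, W ω)) (x, w) * Real.log (pr p (fun ω => (T ω, W ω)) (x, w))
        + pr p W w * Real.log (pr p W w) := by
  by_cases hw : pr p W w = 0
  · have hJ : ∀ x, pr p (fun ω => (T ω, W ω)) (x, w) = 0 := fun x =>
      le_antisymm (hw ▸ pr_pair_le_right p hp T W x w) (pr_nonneg p hp _ _)
    simp [hw, hJ]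
  · have hterm : ∀ J, pr p W w * (J / pr p W w * Real.log (J / pr p W w))
        = J * Real.log J - J * Real.log (pr p W w) := fun J => by
      by_cases hJ : J = 0
      · simp [hJ]
      · rw [Real.log_div hJ hw]
        field_simp
    simp only [ent, pr_condp, mul_neg, Finset.mul_sum, hterm, Finset.sum_sub_distrib,
      ← Finset.sum_mul, sum_pr_pair_left]
    ring

lemma sum_pr_mul_ent_condp [Fintype α] [Fintype γ] (hp : ∀ ω, 0 ≤ p ω) (T : Ω → α)
    (W : Ω → γ) :
    ∑ w, pr p W w * ent (condp p W w) T = ent p (fun ω => (T ω, W ω)) - ent p W := by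
  rw [Finset.sum_congr rfl fun w _ => pr_mul_ent_condp p hp T W w]
  simp only [Finset.sum_add_distrib, Finset.sum_neg_distrib, ent, Fintype.sum_prod_type]
  rw [Finset.sum_comm]
  ring

end Conditioning

section Gibbs

variable {Ω α β γ : Type*} [Fintype Ω]

lemma sub_le_mul_log_div {r q : ℝ} (hr : 0 ≤ r) (hq : 0 ≤ q) (hqr : q = 0 → r = 0) :
    r - q ≤ r * Real.log (r / q) := by
  rcases hr.eq_or_lt with rfl | hr
  · simpa using hq
  have hq : 0 < q := hq.lt_of_ne fun h => hr.ne' (hqr h.symm)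
  have hlog := Real.log_le_sub_one_of_pos (div_pos hq hr)
  rw [← inv_div, Real.log_inv] at hlog
  have hmul := mul_le_mul_of_nonneg_left hlog hr.le
  have hcancel : r * ((r / q)⁻¹ - 1) = q - r := by field_simp
  linarith [hmul, hcancel]

lemma mi_eq_sum_mul_log_div [Fintype α] [Fintype β] (q : Ω → ℝ) (hq : ∀ ω, 0 ≤ q ω)
    (X : Ω → α) (Y : Ω → β) :
    mi q X Y = ∑ x, ∑ y, pr q (fun ω => (X ω, Y ω)) (x, y)
      * Real.log (pr q (fun ω => (X ω, Y ω)) (x, y) / (pr q X x * pr q Y y)) := by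
  have hsplit : ∀ x y, pr q (fun ω => (X ω, Y ω)) (x, y)
        * Real.log (pr q (fun ω => (X ω, Y ω)) (x, y) / (pr q X x * pr q Y y))
      = pr q (fun ω => (X ω, Y ω)) (x, y) * Real.log (pr q (fun ω => (X ω, Y ω)) (x, y))
        - pr q (fun ω => (X ω, Y ω)) (x, y) * Real.log (pr q X x)
        - pr q (fun ω => (X ω, Y ω)) (x, y) * Real.log (pr q Y y) := fun x y => by
    rcases (pr_nonneg q hq _ (x, y)).eq_or_lt with h | h
    · rw [← h]
      simp
    have hx := h.trans_le (pr_pair_le_left q hq X Y x y)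
    have hy := h.trans_le (pr_pair_le_right q hq X Y x y)
    rw [Real.log_div h.ne' (by positivity), Real.log_mul hx.ne' hy.ne']
    ring
  simp only [hsplit, Finset.sum_sub_distrib, ← Finset.sum_mul, sum_pr_pair_right]
  rw [Finset.sum_comm (f := fun x y => pr q (fun ω => (X ω, Y ω)) (x, y) * Real.log (pr q Y y))]
  simp only [← Finset.sum_mul, sum_pr_pair_left, mi, ent, Fintype.sum_prod_type]
  ring

lemma mi_nonneg [Fintype α] [Fintype β] (q : Ω → ℝ) (hq : ∀ ω, 0 ≤ q ω) (hs : ∑ ω, q ω = 1)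
    (X : Ω → α) (Y : Ω → β) : 0 ≤ mi q X Y := by
  have hmass : ∑ x, ∑ y, (pr q (fun ω => (X ω, Y ω)) (x, y) - pr q X x * pr q Y y) = 0 := by
    simp only [Finset.sum_sub_distrib, sum_pr_pair_right, ← Finset.sum_mul_sum, sum_pr, hs]
    norm_num
  rw [mi_eq_sum_mul_log_div q hq, ← hmass]
  refine Finset.sum_le_sum fun x _ => Finset.sum_le_sum fun y _ => ?_
  refine sub_le_mul_log_div (pr_nonneg q hq _ _)
    (mul_nonneg (pr_nonneg q hq X x) (pr_nonneg q hq Y y)) fun h => ?_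
  rcases mul_eq_zero.1 h with h | h
  · exact le_antisymm (h ▸ pr_pair_le_left q hq X Y x y) (pr_nonneg q hq _ _)
  · exact le_antisymm (h ▸ pr_pair_le_right q hq X Y x y) (pr_nonneg q hq _ _)

lemma cmi_nonneg [Fintype α] [Fintype β] [Fintype γ] (p : Ω → ℝ) (hp : ∀ ω, 0 ≤ p ω)
    (X : Ω → α) (Y : Ω → β) (W : Ω → γ) : 0 ≤ cmi p X Y W := by
  refine Finset.sum_nonneg fun w _ => ?_
  by_cases hw : pr p W w = 0
  · simp [hw]
  · exact mul_nonneg (pr_nonneg p hp W w)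
      (mi_nonneg _ (condp_nonneg p hp W w) (sum_condp p W w hw) X Y)

end Gibbs

section ShannonIdentity

variable {Ω α β γ δ : Type*} [Fintype Ω] [Fintype α] [Fintype β] [Fintype γ] [Fintype δ]
  (p : Ω → ℝ)

lemma cmi_eq_ent (hp : ∀ ω, 0 ≤ p ω) (X : Ω → α) (Y : Ω → β) (W : Ω → γ) :
    cmi p X Y W = ent p (fun ω => (X ω, W ω)) + ent p (fun ω => (Y ω, W ω))
      - ent p (fun ω => ((X ω, Y ω), W ω)) - ent p W := by
  simp only [cmi, mi, mul_sub, mul_add, Finset.sum_sub_distrib, Finset.sum_add_distrib,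
    sum_pr_mul_ent_condp p hp]
  ring

lemma cmi_add_cmi_add_cmi (hp : ∀ ω, 0 ≤ p ω)
    (X : Ω → α) (X' : Ω → β) (Y : Ω → γ) (Z : Ω → δ) :
    cmi p X Y Z + cmi p X X' (fun ω => (Y ω, Z ω)) + cmi p Y Z X'
      = cmi p Y Z (fun ω => (X ω, X' ω)) + cmi p Y X X' + cmi p X X' Z := by
  have e₁ : ent p (fun ω => (Y ω, (X ω, X' ω))) = ent p (fun ω => ((Y ω, X ω), X' ω)) :=
    ent_comp_equiv p (Equiv.prodAssoc _ _ _) fun ω => ((Y ω, X ω), X' ω)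
  have e₂ : ent p (fun ω => (Z ω, (X ω, X' ω))) = ent p (fun ω => ((X ω, X' ω), Z ω)) :=
    ent_comp_equiv p (Equiv.prodComm _ _) fun ω => ((X ω, X' ω), Z ω)
  have e₃ : ent p (fun ω => ((Y ω, Z ω), (X ω, X' ω)))
      = ent p (fun ω => ((X ω, X' ω), (Y ω, Z ω))) :=
    ent_comp_equiv p (Equiv.prodComm _ _) fun ω => ((X ω, X' ω), (Y ω, Z ω))
  have e₄ : ent p (fun ω => (Z ω, X' ω)) = ent p (fun ω => (X' ω, Z ω)) :=
    ent_comp_equiv p (Equiv.prodComm _ _) fun ω => (X' ω, Z ω)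
  have e₅ : ent p (fun ω => ((X ω, Y ω), Z ω)) = ent p (fun ω => (X ω, (Y ω, Z ω))) :=
    (ent_comp_equiv p (Equiv.prodAssoc _ _ _) fun ω => ((X ω, Y ω), Z ω)).symm
  have e₆ : ent p (fun ω => ((Y ω, Z ω), X' ω)) = ent p (fun ω => (X' ω, (Y ω, Z ω))) :=
    (ent_comp_equiv p (Equiv.prodComm _ _) fun ω => ((Y ω, Z ω), X' ω)).symm
  simp only [cmi_eq_ent p hp]
  linarith [e₁, e₂, e₃, e₄, e₅, e₆]

end ShannonIdentity

theorem sufficient_for_target_general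
    {Ω 𝒳 𝒳' 𝒴 𝒵 : Type*} [Fintype Ω] [Fintype 𝒳] [Fintype 𝒳'] [Fintype 𝒴] [Fintype 𝒵]
    (p : Ω → ℝ) (hp : ∀ ω, 0 ≤ p ω)
    (X : Ω → 𝒳) (X' : Ω → 𝒳') (Y : Ω → 𝒴) (Z : Ω → 𝒵)
    (hrep : cmi p Y Z (fun ω => (X ω, X' ω)) = 0)
    (hred : cmi p Y X X' = 0)
    (hsuf : cmi p X X' Z = 0) :
    cmi p X Y Z = 0 := by
  have hid := cmi_add_cmi_add_cmi p hp X X' Y Z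
  have h₁ := cmi_nonneg p hp X Y Z
  have h₂ := cmi_nonneg p hp X X' (fun ω => (Y ω, Z ω))
  have h₃ := cmi_nonneg p hp Y Z X'
  linarith

/-- If `Z` is a representation of `X` (`I(Y;Z|(X,X')) = 0`),
`X` is redundant w.r.t. `X'` for `Y` (`I(Y;X|X') = 0`), and `Z` is sufficient
for `X'` (`I(X;X'|Z) = 0`), then `Z` is sufficient for `Y`: `I(X;Y|Z) = 0`. -/
theorem sufficient_for_target
    {Ω 𝒳 𝒳' 𝒴 𝒵 : Type*} [Fintype Ω] [Fintype 𝒳] [Fintype 𝒳'] [Fintype 𝒴] [Fintype 𝒵]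
    [Nonempty 𝒳] [Nonempty 𝒳'] [Nonempty 𝒴] [Nonempty 𝒵]
    (p : Ω → ℝ) (hp : ∀ ω, 0 ≤ p ω) (hsum : ∑ ω, p ω = 1)
    (X : Ω → 𝒳) (X' : Ω → 𝒳') (Y : Ω → 𝒴) (Z : Ω → 𝒵)
    (hrep : cmi p Y Z (fun ω => (X ω, X' ω)) = 0)
    (hred : cmi p Y X X' = 0)
    (hsuf : cmi p X X' Z = 0) :
    cmi p X Y Z = 0 :=
  sufficient_for_target_general p hp X X' Y Z hrep hred hsuf
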